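/- Let W be an Archimedean ordered ℚ-vector space with x, y ∈ W and y ≥ 0. Then r ∈ [0,∞) is a rate from x to y if and only if f(x) ≥ r·f(y) for every functional f : W → ℝ. Consequently, if also x ≥ 0, then R_max(x→y) = inf_f f(x)/f(y), the infimum ranging over all functionals f with f(y) ≠ 0. -/

import Mathlib

/-!
Separation: if `z ≱ 0`, the Archimedean hypothesis gives an absolutely convex absorbent `U`
with `z ∉ U`. Its gauge (over positive rationals) is sublinear, vanishes on the positive cone and
is `≥ 1` at `z`, so a `ℚ`-linear Hahn–Banach extension `g ≤ gauge` of `q z ↦ q · gauge z` gives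
the positive functional `-g` with `-g z < 0`. Hence `a ≤ b` iff `f a ≤ f b` for every positive
functional `f`.

If `r f y ≤ f x` for all `f`, this yields `⌊n r⌋ • y ≤ n • x` for every `n`, and `⌊n r⌋ / n → r`;
conversely `r f y ≤ f x` is a closed condition on `r` satisfied by every ratio `m / n`. The
formula for `R_max` follows by applying this at each real below the infimum.
-/

open scoped ENNReal

/-- `U` is absolutely convex and absorbent in an ordered ℚ-vector space. -/
def AbsConvexAbsorbent {V : Type*} [AddCommGroup V] [PartialOrder V] [IsOrderedAddMonoid V] [Module ℚ V] (U : Set V) : Prop :=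
  (∀ x ∈ U, ∀ y ∈ U, ∀ l : ℚ, 0 ≤ l → l ≤ 1 → l • x + (1 - l) • y ∈ U) ∧
  (∀ x : V, 0 ≤ x → x ∈ U) ∧
  (∀ x : V, ∃ m : ℚ, 0 < m ∧ m • x ∈ U)

/-- The maximal rate `R_max(x→y) = sup { m/n : n • x ≥ m • y }` in the extended nonnegative
reals (conventions `m/0 = ∞` for `m > 0` and `0/0 = 0`). -/
noncomputable def Rmax {A : Type*} [AddCommMonoid A] [PartialOrder A] [IsOrderedAddMonoid A] (x y : A) : ℝ≥0∞ :=
  sSup {r : ℝ≥0∞ | ∃ n m : ℕ, ¬(n = 0 ∧ m = 0) ∧ m • y ≤ n • x ∧ r = (m : ℝ≥0∞) / (n : ℝ≥0∞)}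

open Set Submodule

structure IsRatSublinear {E : Type*} [AddCommGroup E] [Module ℚ E] (p : E → ℝ) : Prop where
  add_le : ∀ a b, p (a + b) ≤ p a + p b
  smul_of_pos : ∀ q : ℚ, 0 < q → ∀ w, p (q • w) = q * p w

namespace IsRatSublinear

variable {E : Type*} [AddCommGroup E] [Module ℚ E] {p : E → ℝ}

theorem mul_le_of_le_inv_smul (hp : IsRatSublinear p) {q : ℚ} (hq : 0 < q) {w : E} {a : ℝ}
    (h : a ≤ p (q⁻¹ • w)) : q * a ≤ p w := by
  have hw : p w = q * p (q⁻¹ • w) := by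
    rw [← hp.smul_of_pos q hq, smul_inv_smul₀ hq.ne']
  rw [hw]
  exact mul_le_mul_of_nonneg_left h (by exact_mod_cast hq.le)

theorem exists_lt_of_domain_ne_top (hp : IsRatSublinear p) (f : E →ₗ.[ℚ] ℝ)
    (hf : ∀ x : f.domain, f x ≤ p x) (hdom : f.domain ≠ ⊤) : ∃ g : E →ₗ.[ℚ] ℝ, f < g ∧ ∀ x : g.domain, g x ≤ p x := by
  obtain ⟨z, -, hz⟩ : ∃ z ∈ (⊤ : Submodule ℚ E), z ∉ f.domain :=
    SetLike.exists_of_lt (lt_top_iff_ne_top.2 hdom)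
  have lower_le_upper : ∀ a b : f.domain, f a - p (a - z) ≤ p (b + z) - f b := by
    intro a b
    have := hp.add_le (a - z) (b + z)
    rw [sub_add_add_cancel] at this
    have := hf (a + b)
    rw [f.map_add] at this
    push_cast at this
    linarith
  -- any value between the two families of bounds in `lower_le_upper` would do
  set c := ⨅ b : f.domain, (p (b + z) - f b)
  have hbdd : BddBelow (range fun b : f.domain => p (b + z) - f b) :=
    ⟨_, forall_mem_range.2 (lower_le_upper 0)⟩
  have c_le : ∀ b : f.domain, c ≤ p (b + z) - f b := ciInf_le hbdd
  have le_c : ∀ a : f.domain, f a - p (a - z) ≤ c := fun a => le_ciInf (lower_le_upper a)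
  refine ⟨f.supSpanSingleton z c hz, ?_, ?_⟩
  · refine lt_iff_le_not_ge.2 ⟨f.left_le_sup _ _, fun H => hz ?_⟩
    replace H := LinearPMap.domain_mono.monotone H
    rw [LinearPMap.domain_supSpanSingleton, sup_le_iff, span_le, singleton_subset_iff] at H
    exact H.2
  rintro ⟨w, hw⟩
  obtain ⟨x, hx, v, hv, rfl⟩ := mem_sup.1 hw
  obtain ⟨r, rfl⟩ := mem_span_singleton.1 hv
  rw [LinearPMap.supSpanSingleton_apply_mk _ _ _ _ _ hx]
  change f ⟨x, hx⟩ + (r : ℝ) * c ≤ p (x + r • z)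
  have f_smul : ∀ q : ℚ, f (q • ⟨x, hx⟩) = q * f ⟨x, hx⟩ := fun q => by
    rw [f.map_smul, Rat.smul_def]
  rcases lt_trichotomy r 0 with hr | rfl | hr
  · have hr' : 0 < -r := neg_pos.2 hr
    have := hp.mul_le_of_le_inv_smul hr' (w := x + r • z) (a := f ((-r)⁻¹ • ⟨x, hx⟩) - c) <| by
      have h := le_c ((-r)⁻¹ • ⟨x, hx⟩)
      rw [smul_add, smul_smul, inv_mul_eq_div, div_neg, div_self hr.ne, neg_one_smul,
        ← sub_eq_add_neg]
      push_cast at h ⊢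
      linarith
    convert this using 1
    rw [f_smul]
    have hr0 : (r : ℝ) ≠ 0 := by exact_mod_cast hr.ne
    push_cast
    field_simp
    ring
  · simpa using hf ⟨x, hx⟩
  · have := hp.mul_le_of_le_inv_smul hr (w := x + r • z) (a := f (r⁻¹ • ⟨x, hx⟩) + c) <| by
      have h := c_le (r⁻¹ • ⟨x, hx⟩)
      rw [smul_add, inv_smul_smul₀ hr.ne']
      push_cast at h ⊢
      linarith
    convert this using 1
    rw [f_smul]
    push_cast
    field_simp

theorem exists_top (hp : IsRatSublinear p) (f : E →ₗ.[ℚ] ℝ) (hf : ∀ x : f.domain, f x ≤ p x) :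
    ∃ g ≥ f, g.domain = ⊤ ∧ ∀ x : g.domain, g x ≤ p x := by
  set S := {g : E →ₗ.[ℚ] ℝ | ∀ x : g.domain, g x ≤ p x}
  have chain_bdd : ∀ c ⊆ S, IsChain (· ≤ ·) c → ∀ y ∈ c, ∃ ub ∈ S, ∀ g ∈ c, g ≤ ub := by
    intro c hcS c_chain y hy
    have hcd : DirectedOn (· ≤ ·) c := c_chain.directedOn
    refine ⟨LinearPMap.sSup c hcd, ?_, fun _ ↦ LinearPMap.le_sSup hcd⟩
    rintro ⟨x, hx⟩
    have hdir : DirectedOn (· ≤ ·) (LinearPMap.domain '' c) :=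
      directedOn_image.2 (hcd.mono LinearPMap.domain_mono.monotone)
    obtain ⟨_, ⟨g, hgc, rfl⟩, hgx⟩ :=
      (mem_sSup_of_directed (Set.Nonempty.image _ ⟨y, hy⟩) hdir).1 hx
    convert hcS hgc ⟨x, hgx⟩ using 1
    exact ((LinearPMap.le_sSup hcd hgc).2 rfl).symm
  obtain ⟨g, hfg, hgS, hg⟩ := zorn_le_nonempty₀ S chain_bdd f hf
  refine ⟨g, hfg, ?_, hgS⟩
  contrapose! hg
  obtain ⟨g', hgg', hg'⟩ := hp.exists_lt_of_domain_ne_top g hgS hg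
  exact ⟨g', hg', hgg'.le, hgg'.not_ge⟩

theorem exists_extension_of_le (hp : IsRatSublinear p) (f : E →ₗ.[ℚ] ℝ)
    (hf : ∀ x : f.domain, f x ≤ p x) :
    ∃ g : E →ₗ[ℚ] ℝ, (∀ x : f.domain, g x = f x) ∧ ∀ w, g w ≤ p w := by
  obtain ⟨⟨g_dom, g⟩, ⟨-, hfg⟩, rfl : g_dom = ⊤, hg⟩ := hp.exists_top f hf
  exact ⟨g.comp (LinearMap.id.codRestrict ⊤ fun _ ↦ trivial), fun x => (hfg rfl).symm,
    fun w => hg ⟨w, trivial⟩⟩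

end IsRatSublinear

section RatGauge

variable {E : Type*} [AddCommGroup E] [Module ℚ E] {U : Set E} {w : E}

noncomputable def ratGauge (U : Set E) (w : E) : ℝ :=
  sInf ((↑) '' {q : ℚ | 0 < q ∧ q⁻¹ • w ∈ U})

theorem ratGauge_nonneg : 0 ≤ ratGauge U w :=
  Real.sInf_nonneg <| by rintro _ ⟨q, ⟨hq, -⟩, rfl⟩; exact_mod_cast hq.le

theorem ratGauge_le {q : ℚ} (hq : 0 < q) (h : q⁻¹ • w ∈ U) : ratGauge U w ≤ q :=
  csInf_le ⟨0, by rintro _ ⟨q, ⟨hq, -⟩, rfl⟩; exact_mod_cast hq.le⟩ ⟨q, ⟨hq, h⟩, rfl⟩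

theorem ratGauge_nonpos (h : ∀ q : ℚ, 0 < q → q⁻¹ • w ∈ U) : ratGauge U w ≤ 0 := by
  by_contra! hpos
  obtain ⟨q, hq0, hq⟩ := exists_rat_btwn hpos
  exact (ratGauge_le (by exact_mod_cast hq0) (h q (by exact_mod_cast hq0))).not_gt hq

variable (hUa : ∀ x : E, ∃ m : ℚ, 0 < m ∧ m • x ∈ U)
include hUa

theorem exists_lt_ratGauge_add {ε : ℝ} (hε : 0 < ε) :
    ∃ q : ℚ, 0 < q ∧ q⁻¹ • w ∈ U ∧ (q : ℝ) < ratGauge U w + ε := by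
  obtain ⟨m, hm, hmw⟩ := hUa w
  have hne : ((↑) '' {q : ℚ | 0 < q ∧ q⁻¹ • w ∈ U} : Set ℝ).Nonempty :=
    ⟨_, m⁻¹, ⟨inv_pos.2 hm, by rwa [inv_inv]⟩, rfl⟩
  obtain ⟨_, ⟨q, ⟨hq, hqw⟩, rfl⟩, hlt⟩ := Real.lt_sInf_add_pos hne hε
  exact ⟨q, hq, hqw, hlt⟩

theorem ratGauge_smul_le {q : ℚ} (hq : 0 < q) : ratGauge U (q • w) ≤ q * ratGauge U w := by
  have hq' : (0 : ℝ) < q := by exact_mod_cast hq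
  refine le_of_forall_pos_lt_add fun ε hε => ?_
  obtain ⟨q₀, hq₀, hq₀w, hlt⟩ := exists_lt_ratGauge_add hUa (w := w) (div_pos hε hq')
  have hmem : (q * q₀)⁻¹ • q • w ∈ U := by
    rwa [mul_comm, mul_inv, mul_smul, inv_smul_smul₀ hq.ne']
  calc ratGauge U (q • w) ≤ ((q * q₀ : ℚ) : ℝ) := ratGauge_le (mul_pos hq hq₀) hmem
    _ < q * (ratGauge U w + ε / q) := by push_cast; exact mul_lt_mul_of_pos_left hlt hq'
    _ = q * ratGauge U w + ε := by field_simp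

theorem ratGauge_add_le (hUc : Convex ℚ U) (a b : E) :
    ratGauge U (a + b) ≤ ratGauge U a + ratGauge U b := by
  refine le_of_forall_pos_lt_add fun ε hε => ?_
  obtain ⟨qa, hqa, hqaU, hlta⟩ := exists_lt_ratGauge_add hUa (w := a) (half_pos hε)
  obtain ⟨qb, hqb, hqbU, hltb⟩ := exists_lt_ratGauge_add hUa (w := b) (half_pos hε)
  have hsum : 0 < qa + qb := add_pos hqa hqb
  have hmem : (qa + qb)⁻¹ • (a + b) ∈ U := by
    convert hUc hqaU hqbU (div_pos hqa hsum).le (div_pos hqb hsum).le (by field_simp) using 1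
    simp only [smul_add, smul_smul]
    congr 2 <;> field_simp
  calc ratGauge U (a + b) ≤ ((qa + qb : ℚ) : ℝ) := ratGauge_le hsum hmem
    _ < ratGauge U a + ratGauge U b + ε := by push_cast; linarith

theorem isRatSublinear_ratGauge (hUc : Convex ℚ U) : IsRatSublinear (ratGauge U) where
  add_le := ratGauge_add_le hUa hUc
  smul_of_pos q hq w := by
    refine le_antisymm (ratGauge_smul_le hUa hq) ?_
    have h := ratGauge_smul_le hUa (inv_pos.2 hq) (w := q • w)
    rw [inv_smul_smul₀ hq.ne', Rat.cast_inv] at h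
    have hq' : (0 : ℝ) < q := by exact_mod_cast hq
    rwa [← le_inv_mul_iff₀ hq']

theorem one_le_ratGauge (hUc : Convex ℚ U) (hU0 : 0 ∈ U) (hw : w ∉ U) : 1 ≤ ratGauge U w := by
  by_contra! hlt
  obtain ⟨q, hq, hqw, hq_lt⟩ := exists_lt_ratGauge_add hUa (sub_pos.2 hlt)
  have hq1 : q ≤ 1 := by exact_mod_cast (hq_lt.trans_eq (add_sub_cancel _ _)).le
  exact hw (smul_inv_smul₀ hq.ne' w ▸ hUc.smul_mem_of_zero_mem hU0 hqw ⟨hq.le, hq1⟩)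

end RatGauge

section Rate

variable {M : Type*} [AddCommMonoid M] [PartialOrder M] {x y : M} {r : ℝ}

def IsRate (x y : M) (r : ℝ) : Prop :=
  ∀ ε : ℝ, 0 < ε → ∃ n m : ℕ, 0 < n ∧ m • y ≤ n • x ∧ |(m : ℝ) / n - r| < ε

theorem IsRate.mem_of_isClosed (h : IsRate x y r) {s : Set ℝ} (hs : IsClosed s)
    (hsub : ∀ n m : ℕ, 0 < n → m • y ≤ n • x → (m : ℝ) / n ∈ s) : r ∈ s := by
  refine hs.closure_subset (Metric.mem_closure_iff.2 fun ε hε => ?_)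
  obtain ⟨n, m, hn, hle, hlt⟩ := h ε hε
  exact ⟨_, hsub n m hn hle, by rwa [Real.dist_eq, abs_sub_comm]⟩

theorem isRate_of_floor_nsmul_le (hr : 0 ≤ r) (h : ∀ n : ℕ, ⌊r * n⌋₊ • y ≤ n • x) :
    IsRate x y r := by
  intro ε hε
  have hlim : Filter.Tendsto (fun n : ℕ => (⌊r * n⌋₊ : ℝ) / n) Filter.atTop (nhds r) :=
    (tendsto_nat_floor_mul_div_atTop hr).comp tendsto_natCast_atTop_atTop
  obtain ⟨n, hn, hclose⟩ := ((Filter.eventually_gt_atTop 0).and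
    (Metric.tendsto_nhds.1 hlim ε hε)).exists
  exact ⟨n, _, hn, h n, by rwa [← Real.dist_eq]⟩

theorem IsRate.ofReal_le_Rmax [IsOrderedAddMonoid M] (h : IsRate x y r) :
    ENNReal.ofReal r ≤ Rmax x y := by
  refine h.mem_of_isClosed (s := {s | ENNReal.ofReal s ≤ Rmax x y})
    (isClosed_le ENNReal.continuous_ofReal continuous_const) fun n m hn hle => ?_
  change ENNReal.ofReal ((m : ℝ) / n) ≤ sSup _
  refine le_sSup ⟨n, m, fun h => hn.ne' h.1, hle, ?_⟩
  rw [ENNReal.ofReal_div_of_pos (by exact_mod_cast hn), ENNReal.ofReal_natCast,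
    ENNReal.ofReal_natCast]

end Rate

section Archimedean

variable {W : Type*} [AddCommGroup W] [PartialOrder W] [IsOrderedAddMonoid W] [Module ℚ W]
  {x y : W} {r : ℝ}

theorem AbsConvexAbsorbent.convex {U : Set W} (hU : AbsConvexAbsorbent U) : Convex ℚ U := by
  intro a ha b hb s t hs ht hst
  simpa [← hst] using hU.1 a ha b hb s hs (by linarith)

theorem IsRate.mul_le {f : W →ₗ[ℚ] ℝ} (h : IsRate x y r) (hf : ∀ z : W, 0 ≤ z → 0 ≤ f z) :
    r * f y ≤ f x := by
  refine h.mem_of_isClosed (s := {s | s * f y ≤ f x})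
    (isClosed_le (continuous_id.mul continuous_const) continuous_const) fun n m hn hle => ?_
  have := (monotone_iff_map_nonneg f).2 hf hle
  rw [map_nsmul, map_nsmul, nsmul_eq_mul, nsmul_eq_mul] at this
  have hn' : (0 : ℝ) < n := by exact_mod_cast hn
  change (m : ℝ) / n * f y ≤ f x
  rwa [div_mul_eq_mul_div, div_le_iff₀ hn', mul_comm (f x)]

theorem Rmax_le_ofReal_div {f : W →ₗ[ℚ] ℝ} (hf : ∀ z : W, 0 ≤ z → 0 ≤ f z) (hfy : 0 < f y) :
    Rmax x y ≤ ENNReal.ofReal (f x / f y) := by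
  refine sSup_le ?_
  rintro _ ⟨n, m, hnm, hle, rfl⟩
  have key : (m : ℝ) * f y ≤ n * f x := by
    simpa only [map_nsmul, nsmul_eq_mul] using (monotone_iff_map_nonneg f).2 hf hle
  rcases Nat.eq_zero_or_pos n with rfl | hn
  · have hm : (0 : ℝ) < m := by exact_mod_cast Nat.pos_of_ne_zero fun h => hnm ⟨rfl, h⟩
    push_cast at key
    linarith [mul_pos hm hfy]
  · have hn' : (0 : ℝ) < n := by exact_mod_cast hn
    rw [← ENNReal.ofReal_natCast m, ← ENNReal.ofReal_natCast n, ← ENNReal.ofReal_div_of_pos hn']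
    exact ENNReal.ofReal_le_ofReal ((div_le_div_iff₀ hn' hfy).2 (by linarith))

variable (harch : ∀ x : W, 0 ≤ x ↔ ∀ U : Set W, AbsConvexAbsorbent U → x ∈ U)
include harch

theorem smul_nonneg_of_archimedean {q : ℚ} (hq : 0 ≤ q) {x : W} (hx : 0 ≤ x) : 0 ≤ q • x := by
  refine (harch _).2 fun U hU => ?_
  obtain ⟨n, hn⟩ := exists_nat_gt q
  have hn0 : (0 : ℚ) < n := hq.trans_lt hn
  have hmem := hU.convex.smul_mem_of_zero_mem (hU.2.1 0 le_rfl) (hU.2.1 _ (nsmul_nonneg hx n))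
    ⟨div_nonneg hq hn0.le, (div_le_one hn0).2 hn.le⟩
  rwa [← Nat.cast_smul_eq_nsmul ℚ, smul_smul, div_mul_cancel₀ _ hn0.ne'] at hmem

theorem exists_functional_neg_of_not_nonneg {z : W} (hz : ¬ 0 ≤ z) :
    ∃ f : W →ₗ[ℚ] ℝ, (∀ w : W, 0 ≤ w → 0 ≤ f w) ∧ f z < 0 := by
  obtain ⟨U, hU, hzU⟩ : ∃ U : Set W, AbsConvexAbsorbent U ∧ z ∉ U := by
    simpa using mt (harch z).2 hz
  have hp := isRatSublinear_ratGauge hU.2.2 hU.convex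
  have hz0 : z ≠ 0 := fun h => hz h.ge
  set f₀ : W →ₗ.[ℚ] ℝ := LinearPMap.mkSpanSingleton z (ratGauge U z) hz0
  have hf₀ : ∀ x : f₀.domain, f₀ x ≤ ratGauge U x := by
    rintro ⟨_, hx⟩
    obtain ⟨q, rfl⟩ := mem_span_singleton.1 hx
    rw [LinearPMap.mkSpanSingleton'_apply, Rat.smul_def]
    rcases le_or_gt q 0 with hq | hq
    · exact (mul_nonpos_of_nonpos_of_nonneg (by exact_mod_cast hq) ratGauge_nonneg).trans
        ratGauge_nonneg
    · exact (hp.smul_of_pos q hq z).ge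
  obtain ⟨g, hg_eq, hg_le⟩ := hp.exists_extension_of_le f₀ hf₀
  refine ⟨-g, fun w hw => ?_, ?_⟩
  · have : ratGauge U w ≤ 0 := ratGauge_nonpos fun q hq =>
      hU.2.1 _ (smul_nonneg_of_archimedean harch (inv_nonneg.2 hq.le) hw)
    simpa using (hg_le w).trans this
  · have hgz : g z = ratGauge U z :=
      (hg_eq ⟨z, mem_span_singleton_self z⟩).trans (LinearPMap.mkSpanSingleton_apply ℚ ℚ hz0 _)
    have := one_le_ratGauge hU.2.2 hU.convex (hU.2.1 0 le_rfl) hzU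
    simp only [LinearMap.neg_apply, neg_lt_zero]
    linarith

theorem le_iff_forall_functional {a b : W} :
    a ≤ b ↔ ∀ f : W →ₗ[ℚ] ℝ, (∀ z : W, 0 ≤ z → 0 ≤ f z) → f a ≤ f b := by
  refine ⟨fun hab f hf => (monotone_iff_map_nonneg f).2 hf hab, fun H => ?_⟩
  by_contra hab
  obtain ⟨f, hf, hlt⟩ :=
    exists_functional_neg_of_not_nonneg harch (z := b - a) (by rwa [sub_nonneg])
  rw [map_sub] at hlt
  linarith [H f hf]

theorem floor_nsmul_le_of_forall_functional (hy : 0 ≤ y) (hr : 0 ≤ r)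
    (H : ∀ f : W →ₗ[ℚ] ℝ, (∀ z : W, 0 ≤ z → 0 ≤ f z) → r * f y ≤ f x) (n : ℕ) :
    ⌊r * n⌋₊ • y ≤ n • x := by
  refine (le_iff_forall_functional harch).2 fun f hf => ?_
  rw [map_nsmul, map_nsmul, nsmul_eq_mul, nsmul_eq_mul]
  calc (⌊r * n⌋₊ : ℝ) * f y ≤ r * n * f y :=
        mul_le_mul_of_nonneg_right (Nat.floor_le (by positivity)) (hf y hy)
    _ = n * (r * f y) := by ring
    _ ≤ n * f x := mul_le_mul_of_nonneg_left (H f hf) n.cast_nonneg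

theorem isRate_iff_forall_functional (hy : 0 ≤ y) (hr : 0 ≤ r) :
    IsRate x y r ↔ ∀ f : W →ₗ[ℚ] ℝ, (∀ z : W, 0 ≤ z → 0 ≤ f z) → r * f y ≤ f x :=
  ⟨fun h _ hf => h.mul_le hf,
    fun H => isRate_of_floor_nsmul_le hr (floor_nsmul_le_of_forall_functional harch hy hr H)⟩

theorem Rmax_eq_iInf_functional (hy : 0 ≤ y) (hx : 0 ≤ x) :
    Rmax x y = ⨅ (f : W →ₗ[ℚ] ℝ) (_ : ∀ z : W, 0 ≤ z → 0 ≤ f z) (_ : f y ≠ 0),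
      ENNReal.ofReal (f x / f y) := by
  refine le_antisymm (le_iInf₂ fun f hf => le_iInf fun hfy =>
    Rmax_le_ofReal_div hf ((hf y hy).lt_of_ne' hfy)) (ENNReal.le_of_forall_nnreal_lt fun t ht => ?_)
  have H : ∀ f : W →ₗ[ℚ] ℝ, (∀ z : W, 0 ≤ z → 0 ≤ f z) → (t : ℝ) * f y ≤ f x := by
    intro f hf
    rcases (hf y hy).eq_or_lt' with hfy | hfy
    · rw [hfy, mul_zero]
      exact hf x hx
    · have := ht.trans_le ((iInf₂_le f hf).trans (iInf_le _ hfy.ne'))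
      rw [ENNReal.coe_lt_ofReal, lt_div_iff₀ hfy] at this
      exact this.le
  simpa using ((isRate_iff_forall_functional harch hy t.coe_nonneg).2 H).ofReal_le_Rmax

end Archimedean

theorem stmt19_general {W : Type*} [AddCommGroup W] [PartialOrder W] [IsOrderedAddMonoid W] [Module ℚ W]
    (harch : ∀ x : W, 0 ≤ x ↔ ∀ U : Set W, AbsConvexAbsorbent U → x ∈ U)
    (x y : W) (hy : 0 ≤ y) :
    (∀ r : ℝ, 0 ≤ r →
      ((∀ ε : ℝ, 0 < ε → ∃ n m : ℕ, 0 < n ∧ m • y ≤ n • x ∧ |(m : ℝ) / n - r| < ε) ↔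
        (∀ f : W →ₗ[ℚ] ℝ, (∀ z : W, 0 ≤ z → 0 ≤ f z) → r * f y ≤ f x))) ∧
    (0 ≤ x →
      Rmax x y = ⨅ (f : W →ₗ[ℚ] ℝ) (_ : ∀ z : W, 0 ≤ z → 0 ≤ f z) (_ : f y ≠ 0),
        ENNReal.ofReal (f x / f y)) :=
  ⟨fun _ hr => isRate_iff_forall_functional harch hy hr,
    fun hx => Rmax_eq_iInf_functional harch hy hx⟩

/-- In an Archimedean ordered ℚ-vector space `W` with `y ≥ 0`, a real `r ≥ 0` is a rate from
`x` to `y` iff `f x ≥ r · f y` for every functional `f`.  Consequently, if moreover `x ≥ 0`,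
then `R_max(x→y) = inf_f f(x)/f(y)` over the functionals `f` with `f y ≠ 0`. -/
theorem stmt19 {W : Type*} [AddCommGroup W] [PartialOrder W] [IsOrderedAddMonoid W] [Module ℚ W]
    (hsmul : ∀ (q : ℚ) (x : W), 0 ≤ q → 0 ≤ x → 0 ≤ q • x)
    (harch : ∀ x : W, 0 ≤ x ↔ ∀ U : Set W, AbsConvexAbsorbent U → x ∈ U)
    (x y : W) (hy : 0 ≤ y) :
    (∀ r : ℝ, 0 ≤ r →
      ((∀ ε : ℝ, 0 < ε → ∃ n m : ℕ, 0 < n ∧ m • y ≤ n • x ∧ |(m : ℝ) / n - r| < ε) ↔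
        (∀ f : W →ₗ[ℚ] ℝ, (∀ z : W, 0 ≤ z → 0 ≤ f z) → r * f y ≤ f x))) ∧
    (0 ≤ x →
      Rmax x y = ⨅ (f : W →ₗ[ℚ] ℝ) (_ : ∀ z : W, 0 ≤ z → 0 ≤ f z) (_ : f y ≠ 0),
        ENNReal.ofReal (f x / f y)) :=
  stmt19_general harch x y hy
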